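/- Let F be a rigid field of level s(F) = 2, let x₁,...,x_r ∈ F* represent pairwise different square classes with ⟨x₁,...,x_r⟩ anisotropic, and let φ, ψ be quadratic forms over F with φ ⊥ ψ anisotropic such that each x_i lies in D_F(φ ⊥ ψ) but not in D_F(φ) ∪ D_F(ψ). Then ⟨−x₁,...,−x_r⟩ is a subform of φ and also a subform of ψ. -/

import Mathlib

namespace PN

variable (F : Type*) [Field F]

/-- The diagonal quadratic form with diagonal entries given by a list. -/
noncomputable def qf (l : List F) : QuadraticForm F (Fin l.length → F) :=
  QuadraticMap.weightedSumSquares F l.get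

/-- Isometry of diagonal quadratic forms. -/
def Isom (l l' : List F) : Prop :=
  Nonempty (QuadraticMap.IsometryEquiv (qf F l) (qf F l'))

/-- Diagonalization of the sum of `k` hyperbolic planes. -/
def hypList (k : ℕ) : List F :=
  List.replicate k (1 : F) ++ List.replicate k (-1 : F)

/-- A (diagonalized) form is hyperbolic if it is isometric to a sum of hyperbolic planes. -/
def IsHyp (l : List F) : Prop := ∃ k : ℕ, Isom F l (hypList F k)

def negList (l : List F) : List F := l.map (fun x => -x)

/-- Witt equivalence of diagonalized quadratic forms. -/
def WittEquiv (l l' : List F) : Prop := IsHyp F (l ++ negList F l')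

/-- Nondegeneracy: all diagonal entries are nonzero. -/
def Nondeg (l : List F) : Prop := ∀ x ∈ l, x ≠ 0

/-- Diagonalization of the Pfister form `⟪a₁,…,aₙ⟫ = ⟨1,-a₁⟩⊗⋯⊗⟨1,-aₙ⟩`. -/
def pfister : List F → List F
  | [] => [1]
  | a :: l => pfister l ++ (pfister l).map (fun x => -a * x)

/-- `l` is a diagonalization of an `n`-fold Pfister form. -/
def IsPfister (n : ℕ) (l : List F) : Prop :=
  ∃ a : Fin n → F, (∀ i, a i ≠ 0) ∧ l = pfister F (List.ofFn a)

/-- `l` is a diagonalization of a form similar to an `n`-fold Pfister form. -/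
def IsGP (n : ℕ) (l : List F) : Prop :=
  ∃ c : F, c ≠ 0 ∧ ∃ p : List F, IsPfister F n p ∧ l = p.map (fun x => c * x)

/-- The Witt class of `l` lies in `IⁿF`, i.e. it is a sum of classes of
forms similar to `n`-fold Pfister forms. -/
def InI (n : ℕ) (l : List F) : Prop :=
  ∃ L : List (List F), (∀ p ∈ L, IsGP F n p) ∧ WittEquiv F l L.flatten

/-- The (scaled) `n`-Pfister number of `l` (`⊤` if the Witt class of `l` is not in `IⁿF`). -/
noncomputable def GPnum (n : ℕ) (l : List F) : ℕ∞ :=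
  sInf {k : ℕ∞ | ∃ L : List (List F), (L.length : ℕ∞) = k ∧
    (∀ p ∈ L, IsGP F n p) ∧ WittEquiv F l L.flatten}

/-- The unscaled `n`-Pfister number: least number of genuine `n`-fold Pfister
forms with signs `±1` whose Witt classes sum to that of `l`. -/
noncomputable def Pnum (n : ℕ) (l : List F) : ℕ∞ :=
  sInf {k : ℕ∞ | ∃ L : List (List F), (L.length : ℕ∞) = k ∧
    (∀ p ∈ L, IsPfister F n p ∨ ∃ q : List F, IsPfister F n q ∧ p = negList F q) ∧
    WittEquiv F l L.flatten}

/-- `GP_n(F, d)`: the supremum of `n`-Pfister numbers of forms in `IⁿF` of dimension `≤ d`. -/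
noncomputable def GPsup (n : ℕ) (d : ℕ) : ℕ∞ :=
  ⨆ l ∈ {l : List F | Nondeg F l ∧ InI F n l ∧ l.length ≤ d}, GPnum F n l

/-- `a` is a nonzero value represented by the form `l`. -/
def Represents (l : List F) (a : F) : Prop := a ≠ 0 ∧ ∃ x, qf F l x = a

/-- The set of nonzero represented values. -/
def D (l : List F) : Set F := {a | Represents F l a}

def Anisotropic (l : List F) : Prop := (qf F l).Anisotropic

def SameSquareClass (a b : F) : Prop := ∃ c : F, c ≠ 0 ∧ a = b * c ^ 2

/-- A field is rigid if every anisotropic binary form represents at most two square classes. -/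
def Rigid : Prop := ∀ x y : F, x ≠ 0 → y ≠ 0 → Anisotropic F [x, y] →
  ∃ u v : F, ∀ a : F, Represents F [x, y] a →
    SameSquareClass F a u ∨ SameSquareClass F a v

/-- The level `s(F)`: the least `n` such that `-1` is a sum of `n` squares (`⊤` if none). -/
noncomputable def level : ℕ∞ :=
  sInf {m : ℕ∞ | ∃ n : ℕ, m = (n : ℕ∞) ∧ ∃ f : Fin n → F, (-1 : F) = ∑ i, f i ^ 2}

/-- `l` is (isometric to) a subform of `l'`. -/
def Subform (l l' : List F) : Prop := ∃ r : List F, Isom F l' (l ++ r)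

end PN

/-! Over a rigid field of level 2, every value of an anisotropic binary form `⟨a, b⟩` lies in the
square class of `a` or of `b`, or in that of `-a` when `a` and `b` share a class: rigidity allows
only two classes, and `D⟨1, 1⟩` consists of the classes of `1` and `-1`. Writing `xᵢ = α + β` with
`α ∈ D(φ)`, `β ∈ D(ψ)` and applying this to `⟨α, β⟩` shows `-xᵢ ∈ D(φ) ∩ D(ψ)`. The `-xᵢ` are then
split off one at a time: after `φ ≅ ⟨-x₁⟩ ⊥ ρ`, each further `-xⱼ` is `-x₁ s² + c` with `c ∈ D(ρ)`,
and the same classification for `⟨-x₁, c⟩` gives `-xⱼ ∈ D(ρ)`, since `xⱼ` is in the class neither of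
`x₁` nor, by anisotropy of `⟨x₁, …, x_r⟩`, of `-x₁`. -/

namespace PN

variable {F : Type*} [Field F] {l l' t t' : List F}

lemma qf_apply (l : List F) (v : Fin l.length → F) : qf F l v = ∑ i, l.get i * v i ^ 2 := by
  simp [qf, QuadraticMap.weightedSumSquares_apply, sq]

lemma qf_singleton (a : F) (v : Fin 1 → F) : qf F [a] v = a * v 0 ^ 2 :=
  (qf_apply [a] v).trans (by simp)

lemma qf_pair (a b : F) (v : Fin 2 → F) : qf F [a, b] v = a * v 0 ^ 2 + b * v 1 ^ 2 :=
  (qf_apply [a, b] v).trans (by simp [Fin.sum_univ_two])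

def appendEquiv (l l' : List F) :
    ((Fin l.length → F) × (Fin l'.length → F)) ≃ₗ[F] (Fin (l ++ l').length → F) :=
  (LinearEquiv.sumArrowLequivProdArrow _ _ F F).symm.trans <|
    LinearEquiv.funCongrLeft F F ((finCongr List.length_append).trans finSumFinEquiv.symm)

lemma qf_append_appendEquiv (l l' : List F) (p : (Fin l.length → F) × (Fin l'.length → F)) :
    qf F (l ++ l') (appendEquiv l l' p) = qf F l p.1 + qf F l' p.2 := by
  obtain ⟨u, w⟩ := p
  simp only [qf_apply]
  rw [← Fintype.sum_equiv ((finCongr List.length_append).trans finSumFinEquiv.symm).symm _ _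
    fun _ => rfl, Fintype.sum_sum_type]
  simp [appendEquiv, LinearEquiv.funCongrLeft_apply, List.getElem_append_left,
    List.getElem_append_right]

lemma Isom.refl (l : List F) : Isom F l l := ⟨.refl _⟩

lemma Isom.symm (h : Isom F l l') : Isom F l' l := h.map .symm

lemma Isom.trans {l'' : List F} (h : Isom F l l') (h' : Isom F l' l'') : Isom F l l'' :=
  h.map2 .trans h'

lemma Isom.append (h : Isom F l l') (h' : Isom F t t') : Isom F (l ++ t) (l' ++ t') := by
  obtain ⟨e⟩ := h
  obtain ⟨e'⟩ := h'
  let appendIsometry (l t : List F) : ((qf F l).prod (qf F t)).IsometryEquiv (qf F (l ++ t)) :=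
    { appendEquiv l t with map_app' := qf_append_appendEquiv l t }
  exact ⟨((appendIsometry l t).symm.trans (e.prod e')).trans (appendIsometry l' t')⟩

lemma Isom.represents (h : Isom F l l') {a : F} (ha : Represents F l a) : Represents F l' a := by
  obtain ⟨e⟩ := h
  obtain ⟨ha0, v, rfl⟩ := ha
  exact ⟨ha0, e v, e.map_app v⟩

lemma Isom.anisotropic (h : Isom F l l') (hl : Anisotropic F l) : Anisotropic F l' := by
  obtain ⟨e⟩ := h
  intro v hv
  simpa using hl (e.symm v) (by rwa [e.symm.map_app])

lemma exists_add_of_mem_range_qf_append {a : F} (ha : a ∈ Set.range (qf F (l ++ l'))) :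
    ∃ b ∈ Set.range (qf F l), ∃ c ∈ Set.range (qf F l'), b + c = a := by
  obtain ⟨v, rfl⟩ := ha
  obtain ⟨⟨u, w⟩, rfl⟩ := (appendEquiv l l').surjective v
  exact ⟨_, ⟨u, rfl⟩, _, ⟨w, rfl⟩, (qf_append_appendEquiv l l' (u, w)).symm⟩

lemma Anisotropic.of_append_left (h : Anisotropic F (l ++ l')) : Anisotropic F l := by
  intro u hu
  have h0 := h (appendEquiv l l' (u, 0)) (by simp [qf_append_appendEquiv, hu])
  simpa using congrArg Prod.fst ((appendEquiv l l').map_eq_zero_iff.mp h0)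

lemma Anisotropic.of_append_right (h : Anisotropic F (l ++ l')) : Anisotropic F l' := by
  intro w hw
  have h0 := h (appendEquiv l l' (0, w)) (by simp [qf_append_appendEquiv, hw])
  simpa using congrArg Prod.snd ((appendEquiv l l').map_eq_zero_iff.mp h0)

lemma Anisotropic.pair_of_append (h : Anisotropic F (l ++ l')) {a b : F}
    (ha : Represents F l a) (hb : Represents F l' b) : Anisotropic F [a, b] := by
  obtain ⟨ha0, u, rfl⟩ := ha
  obtain ⟨hb0, w, rfl⟩ := hb
  intro v hv
  rw [qf_pair] at hv
  have h0 := h (appendEquiv l l' (v 0 • u, v 1 • w)) (by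
    rw [qf_append_appendEquiv]
    simp only [QuadraticMap.map_smul, smul_eq_mul]
    linear_combination hv)
  have hu : u ≠ 0 := fun hu => ha0 (by simp [hu])
  have hw : w ≠ 0 := fun hw => hb0 (by simp [hw])
  simp only [map_eq_zero_iff _ (appendEquiv l l').injective, Prod.mk_eq_zero, smul_eq_zero] at h0
  funext i
  fin_cases i
  · exact h0.1.resolve_right hu
  · exact h0.2.resolve_right hw

lemma represents_pair (a b s t : F) (h : a * s ^ 2 + b * t ^ 2 ≠ 0) :
    Represents F [a, b] (a * s ^ 2 + b * t ^ 2) :=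
  ⟨h, ![s, t], (qf_pair a b _).trans (by simp)⟩

lemma isom_cons_mul_sq (d : F) {s : F} (hs : s ≠ 0) (t : List F) :
    Isom F (d :: t) (d * s ^ 2 :: t) :=
  Isom.symm ⟨QuadraticForm.isometryEquivWeightedSumSquaresWeightedSumSquares
    (w := (d * s ^ 2 :: t).get) (w' := (d :: t).get) (Fin.cons (Units.mk0 s hs) 1)
    (Fin.cases (by simp) (by simp))⟩

lemma isom_pair_of_add_eq {d c s a : F} (ha : d * s ^ 2 + c = a) (ha0 : a ≠ 0) :
    Isom F [d, c] [a, d * c * a] := by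
  let g : (Fin 2 → F) →ₗ[F] Fin 2 → F := Matrix.toLin' !![s, c; 1, -(d * s)]
  have hg : ∀ y, g y = ![s * y 0 + c * y 1, y 0 - d * s * y 1] := fun y => by
    ext i; fin_cases i <;> simp [g, Matrix.mulVec, dotProduct, Fin.sum_univ_two]; ring
  have hinj : Function.Injective g := by
    rw [← LinearMap.ker_eq_bot, LinearMap.ker_eq_bot']
    intro y hy
    have h0 := congrFun (hg y) 0
    have h1 := congrFun (hg y) 1
    simp only [hy, Pi.zero_apply, Matrix.cons_val_zero, Matrix.cons_val_one] at h0 h1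
    have hy1 : y 1 = 0 := by
      refine (mul_eq_zero.mp (?_ : a * y 1 = 0)).resolve_left ha0
      linear_combination -ha * y 1 + s * h1 - h0
    have hy0 : y 0 = 0 := by linear_combination -h1 + d * s * hy1
    ext i; fin_cases i
    exacts [hy0, hy1]
  refine Isom.symm ⟨{ LinearEquiv.ofInjectiveEndo g hinj with map_app' := fun y => ?_ }⟩
  change qf F [d, c] (g y) = qf F [a, d * c * a] y
  rw [hg, qf_pair, qf_pair, ← ha]
  simp only [Matrix.cons_val_zero, Matrix.cons_val_one]
  ring

lemma exists_isom_cons_of_represents {a : F} :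
    ∀ {l : List F}, Represents F l a → ∃ ρ, Isom F l (a :: ρ)
  | [], ⟨ha0, v, hv⟩ => absurd (hv.symm.trans ((qf_apply [] v).trans (by simp))) ha0
  | d :: t, ⟨ha0, hat⟩ => by
    obtain ⟨_, ⟨u, rfl⟩, b, hb, hab⟩ := exists_add_of_mem_range_qf_append (l := [d]) hat
    rw [qf_singleton] at hab
    by_cases hb0 : b = 0
    · have hu : u 0 ≠ 0 := fun hu => ha0 (by simp [← hab, hu, hb0])
      exact ⟨t, by simpa [← hab, hb0] using isom_cons_mul_sq d hu t⟩
    · obtain ⟨ρ, hρ⟩ := exists_isom_cons_of_represents ⟨hb0, hb⟩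
      exact ⟨d * b * a :: ρ, ((Isom.refl [d]).append hρ).trans
        ((isom_pair_of_add_eq hab ha0).append (Isom.refl ρ))⟩

section SquareClasses

variable {a b c : F}

lemma SameSquareClass.symm (h : SameSquareClass F a b) : SameSquareClass F b a := by
  obtain ⟨c, hc, rfl⟩ := h
  exact ⟨c⁻¹, inv_ne_zero hc, by field_simp⟩

lemma SameSquareClass.trans (h : SameSquareClass F a b) (h' : SameSquareClass F b c) :
    SameSquareClass F a c := by
  obtain ⟨u, hu, rfl⟩ := h
  obtain ⟨v, hv, rfl⟩ := h'
  exact ⟨v * u, mul_ne_zero hv hu, by ring⟩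

lemma sameSquareClass_neg_comm : SameSquareClass F (-a) b ↔ SameSquareClass F a (-b) :=
  exists_congr fun c => and_congr_right fun _ => by constructor <;> intro h <;> linear_combination -h

lemma sameSquareClass_neg_neg : SameSquareClass F (-a) (-b) ↔ SameSquareClass F a b := by
  rw [sameSquareClass_neg_comm, neg_neg]

lemma not_sameSquareClass_neg_self (h : ¬ IsSquare (-1 : F)) (ha : a ≠ 0) :
    ¬ SameSquareClass F a (-a) := by
  rintro ⟨c, -, hc⟩
  exact h ⟨c, mul_left_cancel₀ ha (by linear_combination -hc)⟩

lemma Represents.of_sameSquareClass {l : List F} (ha : Represents F l a)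
    (h : SameSquareClass F b a) : Represents F l b := by
  obtain ⟨ha0, v, rfl⟩ := ha
  obtain ⟨c, hc, rfl⟩ := h
  exact ⟨mul_ne_zero ha0 (pow_ne_zero 2 hc), c • v, by simp [QuadraticMap.map_smul]; ring⟩

end SquareClasses

lemma Anisotropic.pairwise_not_sameSquareClass_neg {l : List F} (h : Anisotropic F l) :
    l.Pairwise fun a b => ¬ SameSquareClass F a (-b) := by
  rw [List.pairwise_iff_get]
  rintro i j hij ⟨c, -, hc⟩
  have hv := h (fun k => if k = i then 1 else if k = j then c else 0) (by
    rw [qf_apply, Fintype.sum_eq_add i j hij.ne (by intro k hk; simp [hk.1, hk.2])]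
    simp [hij.ne']
    linear_combination hc)
  simpa using congrFun hv i

lemma not_isSquare_neg_one_of_level_eq_two (h : level F = 2) : ¬ IsSquare (-1 : F) := by
  rintro ⟨c, hc⟩
  have h1 : level F ≤ 1 := sInf_le ⟨1, by norm_num, fun _ => c, by simp [hc, sq]⟩
  rw [h] at h1
  norm_num at h1

lemma exists_sq_add_sq_eq_neg_one_of_level_eq_two (h : level F = 2) :
    ∃ e f : F, e ^ 2 + f ^ 2 = -1 := by
  have hne : {m : ℕ∞ | ∃ n : ℕ, m = n ∧ ∃ f : Fin n → F, (-1 : F) = ∑ i, f i ^ 2}.Nonempty := by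
    by_contra hne
    rw [Set.not_nonempty_iff_eq_empty] at hne
    rw [level, hne, sInf_empty] at h
    simp at h
  obtain ⟨n, hn, f, hf⟩ := csInf_mem hne
  obtain rfl : n = 2 := by exact_mod_cast (hn.symm.trans h : (n : ℕ∞) = 2)
  exact ⟨f 0, f 1, by simpa [Fin.sum_univ_two] using hf.symm⟩

lemma anisotropic_one_one (h : ¬ IsSquare (-1 : F)) : Anisotropic F [1, 1] := by
  intro v hv
  rw [qf_pair, one_mul, one_mul] at hv
  have hv1 : v 1 = 0 := by
    by_contra hv1
    exact h ⟨v 0 / v 1, by field_simp; linear_combination -hv⟩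
  have hv0 : v 0 = 0 := by simpa [hv1] using hv
  funext i
  fin_cases i
  exacts [hv0, hv1]

lemma Rigid.sameSquareClass_or (hF : Rigid F) {a b p q z : F} (ha : a ≠ 0) (hb : b ≠ 0)
    (han : Anisotropic F [a, b]) (hp : Represents F [a, b] p) (hq : Represents F [a, b] q)
    (hpq : ¬ SameSquareClass F p q) (hz : Represents F [a, b] z) :
    SameSquareClass F z p ∨ SameSquareClass F z q := by
  obtain ⟨u, v, huv⟩ := hF a b ha hb han
  wlog hpu : SameSquareClass F p u generalizing u v
  · exact this v u (fun c hc => (huv c hc).symm) ((huv p hp).resolve_left hpu)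
  have hqv : SameSquareClass F q v := (huv q hq).resolve_left fun hqu => hpq (hpu.trans hqu.symm)
  exact (huv z hz).imp (·.trans hpu.symm) (·.trans hqv.symm)

lemma Rigid.sameSquareClass_one_or_neg_one (hF : Rigid F) (hlevel : level F = 2) {w : F}
    (hw : Represents F [1, 1] w) : SameSquareClass F w 1 ∨ SameSquareClass F w (-1) := by
  have hns := not_isSquare_neg_one_of_level_eq_two hlevel
  obtain ⟨e, f, hef⟩ := exists_sq_add_sq_eq_neg_one_of_level_eq_two hlevel
  have h1 : Represents F [1, 1] 1 := by
    simpa using represents_pair (1 : F) 1 1 0 (by simp)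
  have hm1 : Represents F [1, 1] (-1) := by
    simpa [hef] using represents_pair (1 : F) 1 e f (by simp [hef])
  exact hF.sameSquareClass_or one_ne_zero one_ne_zero (anisotropic_one_one hns) h1 hm1
    (not_sameSquareClass_neg_self hns one_ne_zero) hw

lemma Rigid.sameSquareClass_of_represents_pair (hF : Rigid F) (hlevel : level F = 2)
    {a b z : F} (ha : a ≠ 0) (hb : b ≠ 0) (han : Anisotropic F [a, b])
    (hz : Represents F [a, b] z) :
    SameSquareClass F z a ∨ SameSquareClass F z b ∨
      (SameSquareClass F z (-a) ∧ SameSquareClass F z (-b)) := by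
  by_cases hab : SameSquareClass F a b
  · obtain ⟨hz0, v, rfl⟩ := hz
    obtain ⟨c, hc, rfl⟩ := hab.symm
    have hw : Represents F [1, 1] (v 0 ^ 2 + (c * v 1) ^ 2) := by
      simpa using represents_pair (1 : F) 1 (v 0) (c * v 1) (fun h0 => hz0 (by
        rw [qf_pair]; linear_combination a * h0))
    rcases hF.sameSquareClass_one_or_neg_one hlevel hw with ⟨e, he, he'⟩ | ⟨e, he, he'⟩
    · exact Or.inl ⟨e, he, by rw [qf_pair]; linear_combination a * he'⟩
    · refine Or.inr (Or.inr ⟨⟨e, he, by rw [qf_pair]; linear_combination a * he'⟩,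
        ⟨e / c, div_ne_zero he hc, ?_⟩⟩)
      rw [qf_pair]
      field_simp
      linear_combination he'
  · refine (hF.sameSquareClass_or ha hb han ?_ ?_ hab hz).imp id Or.inl
    · simpa using represents_pair a b 1 0 (by simpa)
    · simpa using represents_pair a b 0 1 (by simpa)

lemma Rigid.represents_of_represents_cons (hF : Rigid F) (hlevel : level F = 2)
    {a b : F} {ρ : List F} (han : Anisotropic F (a :: ρ)) (ha : a ≠ 0)
    (hb : Represents F (a :: ρ) b) (hab : ¬ SameSquareClass F a b)
    (hab' : ¬ SameSquareClass F a (-b)) : Represents F ρ b := by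
  obtain ⟨hb0, hbr⟩ := hb
  obtain ⟨_, ⟨u, rfl⟩, c, hc, hbc⟩ := exists_add_of_mem_range_qf_append (l := [a]) hbr
  rw [qf_singleton] at hbc
  by_cases hc0 : c = 0
  · have hu : u 0 ≠ 0 := fun hu => hb0 (by simp [← hbc, hu, hc0])
    exact (hab (SameSquareClass.symm ⟨u 0, hu, by simp [← hbc, hc0]⟩)).elim
  have hρc : Represents F ρ c := ⟨hc0, hc⟩
  have hpair : Represents F [a, c] b := by
    simpa [← hbc] using represents_pair a c (u 0) 1 (by simpa [hbc])
  have hpair_an : Anisotropic F [a, c] :=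
    Anisotropic.pair_of_append (l := [a]) han ⟨ha, fun _ => 1, (qf_singleton a _).trans (by ring)⟩
      hρc
  rcases hF.sameSquareClass_of_represents_pair hlevel ha hc0 hpair_an hpair with h | h | ⟨h, -⟩
  · exact absurd h.symm hab
  · exact hρc.of_sameSquareClass h
  · exact absurd (sameSquareClass_neg_comm.mp h.symm) hab'

lemma Rigid.subform_of_forall_represents (hF : Rigid F) (hlevel : level F = 2) :
    ∀ {l φ : List F}, Anisotropic F φ →
      l.Pairwise (fun a b => ¬ SameSquareClass F a b ∧ ¬ SameSquareClass F a (-b)) →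
      (∀ a ∈ l, Represents F φ a) → Subform F l φ
  | [], φ, _, _, _ => ⟨φ, Isom.refl φ⟩
  | a :: l, φ, hφ, hl, hrep => by
    obtain ⟨ρ, hρ⟩ := exists_isom_cons_of_represents (hrep a List.mem_cons_self)
    have han : Anisotropic F (a :: ρ) := hρ.anisotropic hφ
    obtain ⟨hal, hl⟩ := List.pairwise_cons.mp hl
    obtain ⟨ρ', hρ'⟩ := hF.subform_of_forall_represents hlevel
      (Anisotropic.of_append_right (l := [a]) han) hl fun b hb =>
        hF.represents_of_represents_cons hlevel han (hrep a List.mem_cons_self).1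
          (hρ.represents (hrep b (List.mem_cons_of_mem a hb))) (hal b hb).1 (hal b hb).2
    exact ⟨ρ', hρ.trans ((Isom.refl [a]).append hρ')⟩

lemma Rigid.represents_neg_of_represents_append (hF : Rigid F) (hlevel : level F = 2)
    {φ ψ : List F} (han : Anisotropic F (φ ++ ψ)) {z : F} (hz : Represents F (φ ++ ψ) z)
    (hφ : ¬ Represents F φ z) (hψ : ¬ Represents F ψ z) :
    Represents F φ (-z) ∧ Represents F ψ (-z) := by
  obtain ⟨hz0, hzr⟩ := hz
  obtain ⟨a, ha, b, hb, rfl⟩ := exists_add_of_mem_range_qf_append hzr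
  have ha0 : a ≠ 0 := by rintro rfl; exact hψ ⟨hz0, by simpa using hb⟩
  have hb0 : b ≠ 0 := by rintro rfl; exact hφ ⟨hz0, by simpa using ha⟩
  have hφa : Represents F φ a := ⟨ha0, ha⟩
  have hψb : Represents F ψ b := ⟨hb0, hb⟩
  have hpair : Represents F [a, b] (a + b) := by
    simpa using represents_pair a b 1 1 (by simpa)
  rcases hF.sameSquareClass_of_represents_pair hlevel ha0 hb0 (han.pair_of_append hφa hψb) hpair
    with h | h | ⟨h₁, h₂⟩
  · exact absurd (hφa.of_sameSquareClass h) hφ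
  · exact absurd (hψb.of_sameSquareClass h) hψ
  · exact ⟨hφa.of_sameSquareClass (sameSquareClass_neg_comm.mpr h₁),
      hψb.of_sameSquareClass (sameSquareClass_neg_comm.mpr h₂)⟩

end PN

theorem stmt_15_general (F : Type*) [Field F]
    (hrigid : PN.Rigid F) (hlevel : PN.level F = 2)
    (r : ℕ) (x : Fin r → F)
    (hdiff : ∀ i j, i ≠ j → ¬ PN.SameSquareClass F (x i) (x j))
    (hxan : PN.Anisotropic F (List.ofFn x))
    (φ ψ : List F)
    (han : PN.Anisotropic F (φ ++ ψ))
    (hrep : ∀ i, PN.Represents F (φ ++ ψ) (x i) ∧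
      ¬ PN.Represents F φ (x i) ∧ ¬ PN.Represents F ψ (x i)) :
    PN.Subform F (List.ofFn (fun i => -x i)) φ ∧
      PN.Subform F (List.ofFn (fun i => -x i)) ψ := by
  have hneg i := hrigid.represents_neg_of_represents_append hlevel han (hrep i).1 (hrep i).2.1
    (hrep i).2.2
  have hxneg := List.pairwise_ofFn.mp hxan.pairwise_not_sameSquareClass_neg
  have hpair : (List.ofFn fun i => -x i).Pairwise fun a b =>
      ¬ PN.SameSquareClass F a b ∧ ¬ PN.SameSquareClass F a (-b) := by
    refine List.pairwise_ofFn.mpr fun i j hij => ?_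
    rw [PN.sameSquareClass_neg_neg, PN.sameSquareClass_neg_comm, neg_neg]
    exact ⟨hdiff i j hij.ne, hxneg hij⟩
  exact ⟨hrigid.subform_of_forall_represents hlevel han.of_append_left hpair
      (List.forall_mem_ofFn_iff.mpr fun i => (hneg i).1),
    hrigid.subform_of_forall_represents hlevel han.of_append_right hpair
      (List.forall_mem_ofFn_iff.mpr fun i => (hneg i).2)⟩

theorem stmt_15 (F : Type*) [Field F] (hF : (2 : F) ≠ 0)
    (hrigid : PN.Rigid F) (hlevel : PN.level F = 2)
    (r : ℕ) (x : Fin r → F) (hx : ∀ i, x i ≠ 0)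
    (hdiff : ∀ i j, i ≠ j → ¬ PN.SameSquareClass F (x i) (x j))
    (hxan : PN.Anisotropic F (List.ofFn x))
    (φ ψ : List F) (hn₁ : PN.Nondeg F φ) (hn₂ : PN.Nondeg F ψ)
    (han : PN.Anisotropic F (φ ++ ψ))
    (hrep : ∀ i, PN.Represents F (φ ++ ψ) (x i) ∧
      ¬ PN.Represents F φ (x i) ∧ ¬ PN.Represents F ψ (x i)) :
    PN.Subform F (List.ofFn (fun i => -x i)) φ ∧
      PN.Subform F (List.ofFn (fun i => -x i)) ψ :=
  stmt_15_general F hrigid hlevel r x hdiff hxan φ ψ han hrep
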